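/- Fix β > 0 and S ⊆ 𝕊^{n−1}. There exists a deterministic set 𝒩 ⊆ S + 2β·B₂ⁿ of cardinality at most (2n+2)·N(S, βB₂ⁿ) such that for every m ∈ ℕ and every m×n real matrix A, and for every v ∈ S, there exists w ∈ 𝒩 with ‖A(v − w)‖ ≤ β·(2‖A restricted to H‖_op + ‖A‖_op/n), where H = {x ∈ ℝⁿ : x₁ + ... + xₙ = 0}. -/

import Mathlib

open Finset

/-- Euclidean norm on `ℝᵏ`. -/
noncomputable def enorm' {k : ℕ} (y : Fin k → ℝ) : ℝ := Real.sqrt (∑ i, (y i)^2)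

/-- Operator norm of `A` restricted to unit vectors in `H`. -/
noncomputable def opNormOn {m n : ℕ} (A : Matrix (Fin m) (Fin n) ℝ)
    (H : Set (Fin n → ℝ)) : ℝ :=
  sSup {r : ℝ | ∃ x ∈ H, enorm' x = 1 ∧ r = enorm' (A.mulVec x)}

/-- Covering number `N(S, βB₂ⁿ)`: least number of Euclidean balls of radius `β`
needed to cover `S`. -/
noncomputable def coveringNumber {n : ℕ} (S : Set (Fin n → ℝ)) (β : ℝ) : ℕ :=
  sInf {k : ℕ | ∃ F : Finset (Fin n → ℝ), F.card = k ∧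
    ∀ x ∈ S, ∃ c ∈ F, enorm' (x - c) ≤ β}

/-!
Cover `S` by `N(S, β)` balls of radius `β`, keeping only centres within `β` of `S`. For `v ∈ S`
near a centre `c`, split `v - c = h + t • u` with `u = 𝟙 / √n`, `h ∈ H` and `|t| ≤ ‖v - c‖ ≤ β`.
Rounding `t` to the nearest of the `2n + 1` points of `[-β, β]` with spacing `β / n` gives a net
point `w = c + s • u` with `‖A (v - w)‖ ≤ ‖A|_H‖ ‖h‖ + |t - s| ‖A‖ ≤ β (‖A|_H‖ + ‖A‖ / n)`.
-/

open WithLp (toLp)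
open scoped Matrix RealInnerProductSpace

section Euclidean

variable {k : ℕ}

theorem enorm'_eq_norm_toLp (y : Fin k → ℝ) : enorm' y = ‖toLp 2 y‖ := by
  simp [enorm', EuclideanSpace.norm_eq, sq_abs]

theorem enorm'_nonneg (y : Fin k → ℝ) : 0 ≤ enorm' y := Real.sqrt_nonneg _

theorem enorm'_add_le (x y : Fin k → ℝ) : enorm' (x + y) ≤ enorm' x + enorm' y := by
  simpa only [enorm'_eq_norm_toLp, WithLp.toLp_add] using norm_add_le _ _

theorem enorm'_smul (c : ℝ) (x : Fin k → ℝ) : enorm' (c • x) = |c| * enorm' x := by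
  simp only [enorm'_eq_norm_toLp, WithLp.toLp_smul, norm_smul, Real.norm_eq_abs]

theorem enorm'_sub_comm (x y : Fin k → ℝ) : enorm' (x - y) = enorm' (y - x) := by
  simp only [enorm'_eq_norm_toLp, WithLp.toLp_sub, norm_sub_rev]

end Euclidean

section OpNormOn

variable {m n : ℕ} (A : Matrix (Fin m) (Fin n) ℝ) (H : Set (Fin n → ℝ))

theorem enorm'_mulVec_le_mul (x : Fin n → ℝ) :
    enorm' (A *ᵥ x) ≤ ‖(Matrix.toLpLin 2 2 A).toContinuousLinearMap‖ * enorm' x := by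
  rw [enorm'_eq_norm_toLp, enorm'_eq_norm_toLp]
  exact (Matrix.toLpLin 2 2 A).toContinuousLinearMap.le_opNorm (toLp 2 x)

theorem opNormOn_nonneg : 0 ≤ opNormOn A H :=
  Real.sSup_nonneg fun _ ⟨_, _, _, hr⟩ ↦ hr ▸ enorm'_nonneg _

theorem enorm'_mulVec_le_opNormOn {x : Fin n → ℝ} (hx : x ∈ H) (hx1 : enorm' x = 1) :
    enorm' (A *ᵥ x) ≤ opNormOn A H := by
  refine le_csSup ⟨‖(Matrix.toLpLin 2 2 A).toContinuousLinearMap‖, ?_⟩ ⟨x, hx, hx1, rfl⟩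
  rintro _ ⟨y, -, hy1, rfl⟩
  simpa [hy1] using enorm'_mulVec_le_mul A y

theorem enorm'_mulVec_le_opNormOn_mul (hH : ∀ (c : ℝ) x, x ∈ H → c • x ∈ H)
    {x : Fin n → ℝ} (hx : x ∈ H) : enorm' (A *ᵥ x) ≤ opNormOn A H * enorm' x := by
  rcases (enorm'_nonneg x).eq_or_lt with h0 | hpos
  · have : x = 0 := by simpa [enorm'_eq_norm_toLp] using h0.symm
    simp [this, enorm']
  have hunit : enorm' ((enorm' x)⁻¹ • x) = 1 := by
    rw [enorm'_smul, abs_inv, abs_of_pos hpos, inv_mul_cancel₀ hpos.ne']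
  have := enorm'_mulVec_le_opNormOn A H (hH _ x hx) hunit
  rw [Matrix.mulVec_smul, enorm'_smul, abs_inv, abs_of_pos hpos, inv_mul_le_iff₀ hpos] at this
  linarith

end OpNormOn

section Covering

variable {n : ℕ} {S : Set (Fin n → ℝ)} {β : ℝ}

theorem exists_finset_cover (hβ : 0 < β) {R : ℝ} (hS : ∀ x ∈ S, enorm' x ≤ R) :
    ∃ F : Finset (Fin n → ℝ), ∀ x ∈ S, ∃ c ∈ F, enorm' (x - c) ≤ β := by
  have hbdd : toLp 2 '' S ⊆ Metric.closedBall (0 : EuclideanSpace ℝ (Fin n)) R := by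
    rintro _ ⟨x, hx, rfl⟩
    simpa [← enorm'_eq_norm_toLp] using hS x hx
  obtain ⟨t, htfin, hcov⟩ := Metric.totallyBounded_iff.1
    ((isCompact_closedBall _ R).totallyBounded.subset hbdd) β hβ
  classical
  refine ⟨htfin.toFinset.image WithLp.ofLp, fun x hx ↦ ?_⟩
  obtain ⟨y, hyt, hxy⟩ := Set.mem_iUnion₂.1 (hcov ⟨x, hx, rfl⟩)
  refine ⟨y.ofLp, mem_image_of_mem _ (htfin.mem_toFinset.2 hyt), ?_⟩
  rw [enorm'_eq_norm_toLp, WithLp.toLp_sub, WithLp.toLp_ofLp, ← dist_eq_norm]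
  exact (Metric.mem_ball.1 hxy).le

theorem exists_cover_card_le_coveringNumber (hβ : 0 < β) {R : ℝ}
    (hS : ∀ x ∈ S, enorm' x ≤ R) :
    ∃ F : Finset (Fin n → ℝ), F.card ≤ coveringNumber S β ∧
      (∀ x ∈ S, ∃ c ∈ F, enorm' (x - c) ≤ β) ∧ ∀ c ∈ F, ∃ x ∈ S, enorm' (x - c) ≤ β := by
  obtain ⟨F₀, hF₀⟩ := exists_finset_cover hβ hS
  obtain ⟨F, hcard, hcov⟩ := Nat.sInf_mem (s := {k | ∃ F : Finset (Fin n → ℝ), F.card = k ∧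
    ∀ x ∈ S, ∃ c ∈ F, enorm' (x - c) ≤ β}) ⟨F₀.card, F₀, rfl, hF₀⟩
  classical
  refine ⟨F.filter fun c ↦ ∃ x ∈ S, enorm' (x - c) ≤ β, (card_filter_le _ _).trans hcard.le,
    fun x hx ↦ ?_, fun c hc ↦ (mem_filter.1 hc).2⟩
  obtain ⟨c, hc, hxc⟩ := hcov x hx
  exact ⟨c, mem_filter.2 ⟨hc, x, hx, hxc⟩, hxc⟩

end Covering

section Grid

variable {n : ℕ} {β t : ℝ}

noncomputable def symmGrid (β : ℝ) (n : ℕ) : Finset ℝ :=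
  (range (2 * n + 1)).image fun k : ℕ ↦ -β + k * (β / n)

theorem card_symmGrid_le : (symmGrid β n).card ≤ 2 * n + 1 :=
  card_image_le.trans (card_range _).le

theorem abs_le_of_mem_symmGrid (hβ : 0 ≤ β) (ht : t ∈ symmGrid β n) : |t| ≤ β := by
  obtain ⟨k, hk, rfl⟩ := mem_image.1 ht
  have hk : (k : ℝ) ≤ 2 * n := by exact_mod_cast Nat.lt_succ_iff.1 (mem_range.1 hk)
  have hstep : k * (β / n) ≤ 2 * β := by
    rcases Nat.eq_zero_or_pos n with rfl | hn
    · simpa using hβ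
    · calc k * (β / n) ≤ 2 * n * (β / n) := by gcongr
        _ = 2 * β := by field_simp
  rw [abs_le]
  constructor <;> nlinarith [mul_nonneg (Nat.cast_nonneg k) (div_nonneg hβ (Nat.cast_nonneg n))]

theorem exists_mem_symmGrid_abs_sub_le (hn : 0 < n) (hβ : 0 < β) (ht : |t| ≤ β) :
    ∃ s ∈ symmGrid β n, |t - s| ≤ β / n := by
  have hnR : (0 : ℝ) < n := Nat.cast_pos.2 hn
  obtain ⟨htl, htu⟩ := abs_le.1 ht
  set x := (t + β) / (β / n) with hx
  have hx0 : 0 ≤ x := div_nonneg (by linarith) (by positivity)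
  have hx2 : x ≤ 2 * n := by
    rw [hx, div_le_iff₀ (by positivity)]
    field_simp
    linarith
  have hfloor : (⌊x⌋₊ : ℝ) ≤ 2 * n := (Nat.floor_le hx0).trans hx2
  refine ⟨-β + ⌊x⌋₊ * (β / n), mem_image.2 ⟨⌊x⌋₊, mem_range.2 ?_, rfl⟩, ?_⟩
  · exact Nat.lt_succ_of_le (by exact_mod_cast hfloor)
  have hdiff : t - (-β + ⌊x⌋₊ * (β / n)) = (x - ⌊x⌋₊) * (β / n) := by
    rw [hx]; field_simp; ring
  rw [hdiff, abs_of_nonneg (mul_nonneg (sub_nonneg.2 (Nat.floor_le hx0)) (by positivity))]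
  exact mul_le_of_le_one_left (by positivity) (by linarith [Nat.lt_floor_add_one x])

end Grid

theorem norm_sub_inner_smul_le {E : Type*} [NormedAddCommGroup E] [InnerProductSpace ℝ E]
    {u : E} (hu : ‖u‖ = 1) (x : E) : ‖x - ⟪x, u⟫ • u‖ ≤ ‖x‖ := by
  have hsq : ‖x - ⟪x, u⟫ • u‖ ^ 2 = ‖x‖ ^ 2 - ⟪x, u⟫ ^ 2 := by
    rw [norm_sub_sq_real, real_inner_smul_right, norm_smul, Real.norm_eq_abs, hu]
    ring_nf
    rw [sq_abs]
    ring
  exact pow_le_pow_iff_left₀ (norm_nonneg _) (norm_nonneg _) two_ne_zero |>.1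
    (by nlinarith [sq_nonneg ⟪x, u⟫])

section UnitOnes

variable {n : ℕ}

noncomputable def unitOnes (n : ℕ) : Fin n → ℝ := fun _ ↦ (√n)⁻¹

theorem sum_unitOnes : ∑ i, unitOnes n i = √n := by
  simp [unitOnes, ← div_eq_mul_inv, Real.div_sqrt]

theorem enorm'_unitOnes (hn : 0 < n) : enorm' (unitOnes n) = 1 := by
  simp [enorm', unitOnes, inv_pow, Real.sq_sqrt (Nat.cast_nonneg n), (Nat.cast_pos.2 hn).ne']

theorem exists_eq_add_smul_unitOnes (hn : 0 < n) (d : Fin n → ℝ) :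
    ∃ h : Fin n → ℝ, ∃ t : ℝ, d = h + t • unitOnes n ∧ ∑ i, h i = 0 ∧
      enorm' h ≤ enorm' d ∧ |t| ≤ enorm' d := by
  have hu : ‖toLp 2 (unitOnes n)‖ = 1 := by rw [← enorm'_eq_norm_toLp, enorm'_unitOnes hn]
  set t := ⟪toLp 2 d, toLp 2 (unitOnes n)⟫ with ht
  have ht' : t = (∑ i, d i) / √n := by
    simp [ht, PiLp.inner_apply, unitOnes, sum_mul, div_eq_mul_inv, mul_comm]
  refine ⟨d - t • unitOnes n, t, (sub_add_cancel _ _).symm, ?_, ?_, ?_⟩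
  · have hsqrt : √(n : ℝ) ≠ 0 := (Real.sqrt_pos.2 (Nat.cast_pos.2 hn)).ne'
    simp only [Pi.sub_apply, Pi.smul_apply, smul_eq_mul, sum_sub_distrib, ← mul_sum,
      sum_unitOnes, ht', div_mul_cancel₀ _ hsqrt, sub_self]
  · simpa only [enorm'_eq_norm_toLp, WithLp.toLp_sub, WithLp.toLp_smul] using
      norm_sub_inner_smul_le hu (toLp 2 d)
  · simpa only [enorm'_eq_norm_toLp, hu, mul_one] using
      abs_real_inner_le_norm (toLp 2 d) (toLp 2 (unitOnes n))

end UnitOnes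

section RoundingNet

variable {m n : ℕ} {β : ℝ}

theorem enorm'_mulVec_add_smul_le (A : Matrix (Fin m) (Fin n) ℝ) {h u : Fin n → ℝ}
    (hh : ∑ i, h i = 0) (hu : enorm' u = 1) (r : ℝ) :
    enorm' (A *ᵥ (h + r • u))
      ≤ opNormOn A {x | ∑ i, x i = 0} * enorm' h + |r| * opNormOn A Set.univ := by
  have hH : ∀ (c : ℝ) (x : Fin n → ℝ), ∑ i, x i = 0 → ∑ i, (c • x) i = 0 := fun c x hx ↦ by
    simp [← mul_sum, hx]
  calc enorm' (A *ᵥ (h + r • u)) ≤ enorm' (A *ᵥ h) + |r| * enorm' (A *ᵥ u) := by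
        rw [Matrix.mulVec_add, Matrix.mulVec_smul, ← enorm'_smul]
        exact enorm'_add_le _ _
    _ ≤ _ := by
        gcongr
        · exact enorm'_mulVec_le_opNormOn_mul A _ hH hh
        · exact enorm'_mulVec_le_opNormOn A _ (Set.mem_univ u) hu

open Classical in
noncomputable def roundingNet (F : Finset (Fin n → ℝ)) (β : ℝ) : Finset (Fin n → ℝ) :=
  (F ×ˢ symmGrid β n).image fun p ↦ p.1 + p.2 • unitOnes n

theorem card_roundingNet_le (F : Finset (Fin n → ℝ)) (β : ℝ) :
    (roundingNet F β).card ≤ (2 * n + 1) * F.card :=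
  card_image_le.trans <| by
    rw [card_product, mul_comm]
    exact Nat.mul_le_mul_right _ card_symmGrid_le

theorem exists_enorm'_sub_le_of_mem_roundingNet (hn : 0 < n) (hβ : 0 ≤ β)
    {F : Finset (Fin n → ℝ)} {S : Set (Fin n → ℝ)}
    (hF : ∀ c ∈ F, ∃ v ∈ S, enorm' (v - c) ≤ β) {w : Fin n → ℝ} (hw : w ∈ roundingNet F β) :
    ∃ v ∈ S, enorm' (w - v) ≤ 2 * β := by
  obtain ⟨⟨c, s⟩, hcs, rfl⟩ := mem_image.1 hw
  obtain ⟨hc, hs⟩ := mem_product.1 hcs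
  obtain ⟨v, hv, hvc⟩ := hF c hc
  refine ⟨v, hv, ?_⟩
  calc enorm' (c + s • unitOnes n - v) ≤ enorm' (c - v) + enorm' (s • unitOnes n) := by
        rw [add_sub_right_comm]
        exact enorm'_add_le _ _
    _ ≤ β + β := by
        rw [enorm'_sub_comm, enorm'_smul, enorm'_unitOnes hn, mul_one]
        exact add_le_add hvc (abs_le_of_mem_symmGrid hβ hs)
    _ = 2 * β := (two_mul β).symm

theorem exists_mem_roundingNet_enorm'_mulVec_sub_le (hn : 0 < n) (hβ : 0 < β)
    (A : Matrix (Fin m) (Fin n) ℝ) {F : Finset (Fin n → ℝ)} {v c : Fin n → ℝ} (hc : c ∈ F)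
    (hvc : enorm' (v - c) ≤ β) :
    ∃ w ∈ roundingNet F β, enorm' (A *ᵥ (v - w))
      ≤ β * (opNormOn A {x | ∑ i, x i = 0} + opNormOn A Set.univ / n) := by
  obtain ⟨h, t, hvc_eq, hh0, hh, ht⟩ := exists_eq_add_smul_unitOnes hn (v - c)
  obtain ⟨s, hs, hts⟩ := exists_mem_symmGrid_abs_sub_le hn hβ (ht.trans hvc)
  refine ⟨c + s • unitOnes n, mem_image.2 ⟨(c, s), mem_product.2 ⟨hc, hs⟩, rfl⟩, ?_⟩
  have hsplit : v - (c + s • unitOnes n) = h + (t - s) • unitOnes n := by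
    rw [← sub_sub, hvc_eq, sub_smul]
    abel
  have := opNormOn_nonneg A {x | ∑ i, x i = 0}
  have := opNormOn_nonneg A Set.univ
  calc enorm' (A *ᵥ (v - (c + s • unitOnes n)))
      ≤ opNormOn A {x | ∑ i, x i = 0} * β + β / n * opNormOn A Set.univ := by
        rw [hsplit]
        refine (enorm'_mulVec_add_smul_le A hh0 (enorm'_unitOnes hn) _).trans ?_
        gcongr
        exact hh.trans hvc
    _ = β * (opNormOn A {x | ∑ i, x i = 0} + opNormOn A Set.univ / n) := by ring

end RoundingNet

/-- Rounding lemma: a deterministic net `𝒩 ⊆ S + 2βB₂ⁿ` of cardinality at most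
`(2n+2)·N(S, βB₂ⁿ)` such that for every `m × n` matrix `A` and every `v ∈ S`
there is `w ∈ 𝒩` with
`‖A(v−w)‖ ≤ β(2‖A|_H‖_op + ‖A‖_op/n)`, where `H = {x : Σ xᵢ = 0}`. -/
theorem stmt_10 (n : ℕ) (β : ℝ) (hβ : 0 < β) (S : Set (Fin n → ℝ))
    (hS : ∀ x ∈ S, enorm' x = 1) :
    ∃ N : Finset (Fin n → ℝ),
      (∀ w ∈ N, ∃ v ∈ S, enorm' (w - v) ≤ 2 * β) ∧
      N.card ≤ (2 * n + 2) * coveringNumber S β ∧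
      ∀ (m : ℕ) (A : Matrix (Fin m) (Fin n) ℝ), ∀ v ∈ S, ∃ w ∈ N,
        enorm' (A.mulVec (v - w))
          ≤ β * (2 * opNormOn A {x | ∑ i, x i = 0}
              + opNormOn A Set.univ / n) := by
  rcases Nat.eq_zero_or_pos n with rfl | hn
  · refine ⟨∅, by simp, by simp, fun m A v hv ↦ absurd (hS v hv) (by simp [enorm'])⟩
  obtain ⟨F, hFcard, hcov, hnear⟩ :=
    exists_cover_card_le_coveringNumber hβ fun x hx ↦ (hS x hx).le
  refine ⟨roundingNet F β, fun w hw ↦ exists_enorm'_sub_le_of_mem_roundingNet hn hβ.le hnear hw,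
    (card_roundingNet_le F β).trans (Nat.mul_le_mul (by omega) hFcard), fun m A v hv ↦ ?_⟩
  obtain ⟨c, hc, hvc⟩ := hcov v hv
  obtain ⟨w, hw, hAw⟩ := exists_mem_roundingNet_enorm'_mulVec_sub_le hn hβ A hc hvc
  refine ⟨w, hw, hAw.trans ?_⟩
  have := opNormOn_nonneg A {x | ∑ i, x i = 0}
  gcongr
  linarith
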